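/- arXiv:2101.01609 — 3 statements merged into one kernel-verified Lean document; each statement's English description precedes it below -/
import Mathlib

section
/- Let I be a closed interval containing 0, let β ∈ (0,1], and let f : I → ℝ be continuously differentiable with f′ Hölder continuous of exponent β on I (f ∈ C^{1,β}(I)). Suppose f(x) = O(|x|^{β_0}) as |x| → 0 for some β_0 ≥ 1 + β, and let 1 < β_1 < β_0. Define h(x) := f(x)/|x|^{β_1} for x ≠ 0 and h(0) := 0. Then h is Hölder continuous on I of exponent β̄ := (β_0 − β_1)/(β_0 − β); i.e., there is C > 0 with |h(x) − h(y)| ≤ C|x − y|^{β̄} for all x, y ∈ I. -/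
/-!
Write `h x = f x / |x| ^ β₁`. By compactness the growth condition holds globally,
`|f x| ≤ A |x| ^ β₀`, which forces `f 0 = f' 0 = 0`; the Hölder bound on `f'` then gives
`|f' t| ≤ C |t| ^ β` and, by the mean value theorem, `|f x - f y| ≤ C r ^ β d` where
`r = max |x| |y|` and `d = |x - y|`. For `0 < |y| ≤ |x| = r` this yields two bounds on
`|h x - h y|`: a size bound `≲ r ^ (β₀ - β₁)` and a Lipschitz-type bound `≲ r ^ (β - β₁) d`.
The first is `≤ d ^ β̄` when `r ^ (β₀ - β) ≤ d`, the second when `d ≤ r ^ (β₀ - β)`: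
`β̄ = (β₀ - β₁) / (β₀ - β)` is the exponent that balances them at `d = r ^ (β₀ - β)`.
-/

open MeasureTheory Filter Asymptotics Topology Real Set

theorem rpow_sub_mul_le_rpow_div {r t p q : ℝ} (hr : 0 < r) (ht : 0 ≤ t) (hp : 0 < p)
    (hqp : q ≤ p) (htr : t ≤ r ^ p) : r ^ (q - p) * t ≤ t ^ (q / p) := by
  have hexp : 0 ≤ 1 - q / p := sub_nonneg.2 ((div_le_one hp).2 hqp)
  calc r ^ (q - p) * t = r ^ (q - p) * (t ^ (1 - q / p) * t ^ (q / p)) := by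
        rw [← rpow_add' ht (by simp), sub_add_cancel, rpow_one]
    _ ≤ r ^ (q - p) * ((r ^ p) ^ (1 - q / p) * t ^ (q / p)) := by gcongr
    _ = t ^ (q / p) := by
        rw [← rpow_mul hr.le, ← mul_assoc, ← rpow_add hr,
          show q - p + p * (1 - q / p) = 0 by field_simp; ring, rpow_zero, one_mul]

theorem exists_holder_of_rpow_bounds {g : ℝ → ℝ} {s : Set ℝ} {p q R A B : ℝ} (hp : 1 ≤ p)
    (hq : 0 < q) (hqp : q ≤ p) (hR : ∀ x ∈ s, |x| ≤ R) (hA : 0 ≤ A) (hB : 0 ≤ B)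
    (hsize : ∀ x ∈ s, |g x| ≤ A * |x| ^ q)
    (hdiff : ∀ x ∈ s, ∀ y ∈ s, 0 < |y| → |y| ≤ |x| → |g x - g y| ≤ B * |x| ^ (q - p) * |x - y|) :
    ∃ K, ∀ x ∈ s, ∀ y ∈ s, |g x - g y| ≤ K * |x - y| ^ (q / p) := by
  set K := max (A * R ^ (q - q / p)) (max (2 * A) B)
  suffices h : ∀ x ∈ s, ∀ y ∈ s, |y| ≤ |x| → |g x - g y| ≤ K * |x - y| ^ (q / p) by
    refine ⟨K, fun x hx y hy => ?_⟩
    rcases le_total |y| |x| with hyx | hxy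
    · exact h x hx y hy hyx
    · rw [abs_sub_comm, abs_sub_comm x]
      exact h y hy x hx hxy
  intro x hx y hy hyx
  have hsum : |g x - g y| ≤ A * |x| ^ q + A * |y| ^ q :=
    (abs_sub _ _).trans (add_le_add (hsize x hx) (hsize y hy))
  rcases (abs_nonneg y).eq_or_lt with hy0 | hy0
  · obtain rfl : y = 0 := abs_eq_zero.1 hy0.symm
    have hexp : 0 ≤ q - q / p := sub_nonneg.2 (div_le_self hq.le hp)
    calc |g x - g 0| ≤ A * |x| ^ q := by simpa [zero_rpow hq.ne'] using hsum
      _ = A * (|x| ^ (q - q / p) * |x| ^ (q / p)) := by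
          rw [← rpow_add' (abs_nonneg x) (by simpa using hq.ne'), sub_add_cancel]
      _ ≤ A * (R ^ (q - q / p) * |x| ^ (q / p)) := by gcongr; exact hR x hx
      _ ≤ K * |x - 0| ^ (q / p) := by
          rw [sub_zero, ← mul_assoc]; gcongr; exact le_max_left _ _
  · have hx0 : 0 < |x| := hy0.trans_le hyx
    rcases le_or_gt (|x| ^ p) |x - y| with hfar | hnear
    · calc |g x - g y| ≤ A * |x| ^ q + A * |x| ^ q := by
            refine hsum.trans ?_; gcongr
        _ = 2 * A * (|x| ^ p) ^ (q / p) := by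
            rw [← rpow_mul (abs_nonneg x), mul_div_cancel₀ _ (by linarith : p ≠ 0)]; ring
        _ ≤ 2 * A * |x - y| ^ (q / p) := by gcongr
        _ ≤ K * |x - y| ^ (q / p) := by
            gcongr; exact (le_max_left _ _).trans (le_max_right _ _)
    · calc |g x - g y| ≤ B * (|x| ^ (q - p) * |x - y|) := by
            rw [← mul_assoc]; exact hdiff x hx y hy hy0 hyx
        _ ≤ B * |x - y| ^ (q / p) := by
            gcongr; exact rpow_sub_mul_le_rpow_div hx0 (abs_nonneg _) (by linarith) hqp hnear.le
        _ ≤ K * |x - y| ^ (q / p) := by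
            gcongr; exact (le_max_right _ _).trans (le_max_right _ _)

theorem one_sub_div_rpow_le {u v γ : ℝ} (hγ : 1 ≤ γ) (hu : 0 < u) (hv : 0 ≤ v) :
    1 - (v / u) ^ γ ≤ γ * ((u - v) / u) := by
  have h := one_add_mul_self_le_rpow_one_add (s := v / u - 1) (by linarith [div_nonneg hv hu.le]) hγ
  rw [add_sub_cancel] at h
  have : (u - v) / u = -(v / u - 1) := by field_simp; ring
  rw [this]
  linarith

theorem abs_div_rpow_sub_div_rpow_le {a b u v γ : ℝ} (hγ : 1 ≤ γ) (hv : 0 < v) (hvu : v ≤ u) :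
    |a / u ^ γ - b / v ^ γ| ≤ |a - b| / u ^ γ + |b / v ^ γ| * (γ * ((u - v) / u)) := by
  have hu : 0 < u := hv.trans_le hvu
  have hdecomp : a / u ^ γ - b / v ^ γ = (a - b) / u ^ γ - b / v ^ γ * (1 - (v / u) ^ γ) := by
    rw [div_rpow hv.le hu.le]
    field_simp
    ring
  have hratio : 0 ≤ 1 - (v / u) ^ γ :=
    sub_nonneg.2 (rpow_le_one (div_nonneg hv.le hu.le) ((div_le_one hu).2 hvu) (by linarith))
  calc |a / u ^ γ - b / v ^ γ|
      ≤ |(a - b) / u ^ γ| + |b / v ^ γ * (1 - (v / u) ^ γ)| := by rw [hdecomp]; exact abs_sub _ _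
    _ = |a - b| / u ^ γ + |b / v ^ γ| * (1 - (v / u) ^ γ) := by
      rw [abs_div, abs_of_pos (rpow_pos_of_pos hu γ), abs_mul, abs_of_nonneg hratio]
    _ ≤ |a - b| / u ^ γ + |b / v ^ γ| * (γ * ((u - v) / u)) := by
      gcongr
      exact one_sub_div_rpow_le hγ hu hv.le

theorem abs_div_rpow_le {a x p γ A : ℝ} (hx : 0 ≤ x) (hpγ : p - γ ≠ 0) (ha : |a| ≤ A * x ^ p) :
    |a / x ^ γ| ≤ A * x ^ (p - γ) := by
  rw [rpow_sub' hx hpγ, abs_div, abs_of_nonneg (rpow_nonneg hx γ), mul_div_assoc']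
  exact div_le_div_of_nonneg_right ha (rpow_nonneg hx γ)

theorem abs_div_rpow_sub_div_rpow_le_of_bounds {a b x y A B R β β₀ β₁ : ℝ} (hβ₁ : 1 ≤ β₁)
    (hβ₀ : 1 + β ≤ β₀) (hβ₁β₀ : β₁ < β₀) (hA : 0 ≤ A) (hxR : |x| ≤ R) (hy : 0 < |y|)
    (hyx : |y| ≤ |x|) (hb : |b| ≤ A * |y| ^ β₀) (hab : |a - b| ≤ B * |x| ^ β * |x - y|) :
    |a / |x| ^ β₁ - b / |y| ^ β₁| ≤ (B + β₁ * A * R ^ (β₀ - 1 - β)) * |x| ^ (β - β₁) * |x - y| := by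
  set u := |x|
  have hu : 0 < u := hy.trans_le hyx
  have hquot : |b / |y| ^ β₁| ≤ A * u ^ (β₀ - β₁) :=
    (abs_div_rpow_le (abs_nonneg y) (by linarith) hb).trans (by gcongr)
  have e1 : u ^ β = u ^ (β - β₁) * u ^ β₁ := by rw [← rpow_add hu]; ring_nf
  have e2 : u ^ (β₀ - β₁) = u ^ (β₀ - 1 - β) * u ^ (β - β₁) * u := by
    rw [← rpow_add hu, ← rpow_add_one hu.ne']; ring_nf
  calc |a / u ^ β₁ - b / |y| ^ β₁|
      ≤ |a - b| / u ^ β₁ + |b / |y| ^ β₁| * (β₁ * ((u - |y|) / u)) :=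
        abs_div_rpow_sub_div_rpow_le hβ₁ hy hyx
    _ ≤ B * u ^ β * |x - y| / u ^ β₁ + A * u ^ (β₀ - β₁) * (β₁ * (|x - y| / u)) := by
        have := abs_sub_abs_le_abs_sub x y
        gcongr
    _ = (B + β₁ * A * u ^ (β₀ - 1 - β)) * u ^ (β - β₁) * |x - y| := by
        rw [e1, e2]; field_simp
    _ ≤ (B + β₁ * A * R ^ (β₀ - 1 - β)) * u ^ (β - β₁) * |x - y| := by
        gcongr; linarith

theorem IsCompact.exists_norm_le_mul_norm_rpow {E F : Type*} [NormedAddCommGroup E]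
    [NormedAddCommGroup F] {s : Set E} {f : E → F} {p : ℝ} (hs : IsCompact s)
    (hf : ContinuousOn f s) (hp : 0 ≤ p) (hO : f =O[𝓝[s] 0] fun x => ‖x‖ ^ p) :
    ∃ C ≥ 0, ∀ x ∈ s, ‖f x‖ ≤ C * ‖x‖ ^ p := by
  obtain ⟨c, hc0, hc⟩ := hO.exists_nonneg
  replace hc := hc.bound
  rw [eventually_nhdsWithin_iff, Metric.eventually_nhds_iff] at hc
  obtain ⟨δ, hδ, hnear⟩ := hc
  obtain ⟨M, hM⟩ := hs.exists_bound_of_continuousOn hf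
  refine ⟨max c (M / δ ^ p), le_max_of_le_left hc0, fun x hx => ?_⟩
  have hδp : 0 < δ ^ p := rpow_pos_of_pos hδ p
  rcases lt_or_ge ‖x‖ δ with hxδ | hxδ
  · calc ‖f x‖ ≤ c * ‖‖x‖ ^ p‖ := hnear (by rwa [dist_zero_right]) hx
      _ = c * ‖x‖ ^ p := by rw [norm_of_nonneg (rpow_nonneg (norm_nonneg x) p)]
      _ ≤ max c (M / δ ^ p) * ‖x‖ ^ p := by gcongr; exact le_max_left _ _
  · have hM0 : 0 ≤ M := (norm_nonneg _).trans (hM x hx)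
    calc ‖f x‖ ≤ M / δ ^ p * δ ^ p := by rw [div_mul_cancel₀ M hδp.ne']; exact hM x hx
      _ ≤ M / δ ^ p * ‖x‖ ^ p := by gcongr
      _ ≤ max c (M / δ ^ p) * ‖x‖ ^ p := by gcongr; exact le_max_right _ _

theorem isLittleO_abs_rpow_id {p : ℝ} (hp : 1 < p) :
    (fun x : ℝ => |x| ^ p) =o[𝓝 0] fun x => x := by
  have hsmall : (fun x : ℝ => |x| ^ (p - 1)) =o[𝓝 0] fun _ => (1 : ℝ) := by
    refine (isLittleO_one_iff ℝ).2 ?_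
    have hcont := (continuous_abs.continuousAt (x := (0 : ℝ))).rpow_const (p := p - 1)
      (Or.inr (by linarith))
    simpa [zero_rpow (by linarith : p - 1 ≠ 0)] using hcont.tendsto
  refine (hsmall.mul_isBigO (isBigO_abs_left.2 (isBigO_refl (fun x : ℝ => x) _))).congr
    (fun x => ?_) (fun x => one_mul x)
  rw [← rpow_add_one' (abs_nonneg x) (by linarith), sub_add_cancel]

theorem HasDerivWithinAt.eq_zero_of_isBigO_rpow {f : ℝ → ℝ} {f₀' p : ℝ} {s : Set ℝ}
    (hf : HasDerivWithinAt f f₀' s 0) (hs : UniqueDiffWithinAt ℝ s 0) (h0 : 0 ∈ s)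
    (hO : f =O[𝓝[s] 0] fun x => |x| ^ p) (hp : 1 < p) : f₀' = 0 := by
  have hf0 : f 0 = 0 := by
    obtain ⟨c, hc⟩ := hO.bound
    have := hc.self_of_nhdsWithin h0
    rw [abs_zero, zero_rpow (by linarith), norm_zero, mul_zero] at this
    exact norm_le_zero_iff.1 this
  refine hs.eq_deriv _ hf (hasDerivWithinAt_iff_isLittleO.2 ?_)
  simpa [hf0] using hO.trans_isLittleO ((isLittleO_abs_rpow_id hp).mono nhdsWithin_le_nhds)

theorem abs_sub_le_mul_max_rpow_of_holder_deriv {f f' : ℝ → ℝ} {s : Set ℝ} {C β x y : ℝ}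
    (hs : s.OrdConnected) (hf : ∀ t ∈ s, HasDerivWithinAt f (f' t) s t) (h0 : 0 ∈ s)
    (hf'0 : f' 0 = 0) (hC : 0 ≤ C) (hβ : 0 ≤ β)
    (hH : ∀ x ∈ s, ∀ y ∈ s, |f' x - f' y| ≤ C * |x - y| ^ β) (hx : x ∈ s) (hy : y ∈ s) :
    |f x - f y| ≤ C * max |x| |y| ^ β * |x - y| := by
  set r := max |x| |y|
  have hseg : uIcc y x ⊆ s := hs.uIcc_subset hy hx
  have hseg_r : uIcc y x ⊆ Icc (-r) r :=
    uIcc_subset_Icc (abs_le.1 (le_max_right _ _)) (abs_le.1 (le_max_left _ _))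
  have hbound : ∀ t ∈ uIcc y x, ‖f' t‖ ≤ C * r ^ β := fun t ht =>
    calc ‖f' t‖ = |f' t - f' 0| := by rw [hf'0, sub_zero, Real.norm_eq_abs]
      _ ≤ C * |t - 0| ^ β := hH t (hseg ht) 0 h0
      _ ≤ C * r ^ β := by rw [sub_zero]; gcongr; exact abs_le.2 (hseg_r ht)
  simpa only [Real.norm_eq_abs] using (convex_uIcc y x).norm_image_sub_le_of_norm_hasDerivWithin_le
    (fun t ht => (hf t (hseg ht)).mono hseg) hbound left_mem_uIcc right_mem_uIcc

theorem exists_holder_div_rpow {f f' : ℝ → ℝ} {s : Set ℝ} {A C R β β₀ β₁ : ℝ}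
    (hs : s.OrdConnected) (h0 : 0 ∈ s) (hR : ∀ x ∈ s, |x| ≤ R) (hβ : 0 ≤ β) (hββ₁ : β ≤ β₁)
    (hβ₀ : 1 + β ≤ β₀) (hβ₁ : 1 ≤ β₁) (hβ₁β₀ : β₁ < β₀)
    (hf : ∀ t ∈ s, HasDerivWithinAt f (f' t) s t) (hf'0 : f' 0 = 0) (hC : 0 ≤ C)
    (hH : ∀ x ∈ s, ∀ y ∈ s, |f' x - f' y| ≤ C * |x - y| ^ β) (hA : 0 ≤ A)
    (hgrowth : ∀ x ∈ s, |f x| ≤ A * |x| ^ β₀) :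
    ∃ K, ∀ x ∈ s, ∀ y ∈ s,
      |f x / |x| ^ β₁ - f y / |y| ^ β₁| ≤ K * |x - y| ^ ((β₀ - β₁) / (β₀ - β)) := by
  have hdiff : ∀ x ∈ s, ∀ y ∈ s, 0 < |y| → |y| ≤ |x| →
      |f x / |x| ^ β₁ - f y / |y| ^ β₁|
        ≤ (C + β₁ * A * R ^ (β₀ - 1 - β)) * |x| ^ ((β₀ - β₁) - (β₀ - β)) * |x - y| := by
    intro x hx y hy hy0 hyx
    have hfxy := abs_sub_le_mul_max_rpow_of_holder_deriv hs hf h0 hf'0 hC hβ hH hx hy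
    rw [max_eq_left hyx] at hfxy
    rw [sub_sub_sub_cancel_left]
    exact abs_div_rpow_sub_div_rpow_le_of_bounds hβ₁ hβ₀ hβ₁β₀ hA (hR x hx) hy0 hyx
      (hgrowth y hy) hfxy
  have hR0 : 0 ≤ R := by simpa using hR 0 h0
  exact exists_holder_of_rpow_bounds (g := fun x => f x / |x| ^ β₁) (by linarith)
    (by linarith) (by linarith) hR hA (by positivity)
    (fun x hx => abs_div_rpow_le (abs_nonneg x) (by linarith) (hgrowth x hx)) hdiff

theorem holder_quotient_C1_general (a b : ℝ) (ha : a ≤ 0) (hb : 0 ≤ b)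
    (β β₀ β₁ : ℝ) (hβ : β ∈ Set.Ioc (0 : ℝ) 1) (hβ₀ : 1 + β ≤ β₀)
    (hβ₁ : 1 < β₁) (hβ₁' : β₁ < β₀)
    (f f' : ℝ → ℝ)
    (hderiv : ∀ x ∈ Set.Icc a b, HasDerivWithinAt f (f' x) (Set.Icc a b) x)
    (hholder : ∃ C > 0, ∀ x ∈ Set.Icc a b, ∀ y ∈ Set.Icc a b,
      |f' x - f' y| ≤ C * |x - y| ^ β)
    (hO : f =O[nhdsWithin 0 (Set.Icc a b)] fun x : ℝ => |x| ^ β₀) :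
    ∃ C > 0, ∀ x ∈ Set.Icc a b, ∀ y ∈ Set.Icc a b,
      |(if x = 0 then 0 else f x / |x| ^ β₁) - (if y = 0 then 0 else f y / |y| ^ β₁)|
        ≤ C * |x - y| ^ ((β₀ - β₁) / (β₀ - β)) := by
  obtain ⟨hβ0, hβ1⟩ := hβ
  rcases (ha.trans hb).eq_or_lt with hab | hab
  · refine ⟨1, one_pos, fun x hx y hy => ?_⟩
    obtain rfl : x = y := by linarith [hx.1, hx.2, hy.1, hy.2]
    simp only [sub_self, abs_zero]
    positivity
  obtain ⟨CH, hCH, hH⟩ := hholder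
  have h0 : (0 : ℝ) ∈ Icc a b := ⟨ha, hb⟩
  obtain ⟨A, hA0, hA⟩ := isCompact_Icc.exists_norm_le_mul_norm_rpow
    (fun x hx => (hderiv x hx).continuousWithinAt) (by linarith : 0 ≤ β₀) hO
  simp only [Real.norm_eq_abs] at hA
  have hf'0 : f' 0 = 0 :=
    (hderiv 0 h0).eq_zero_of_isBigO_rpow (uniqueDiffOn_Icc hab 0 h0) h0 hO (by linarith)
  have hR : ∀ x ∈ Icc a b, |x| ≤ max (-a) b := fun x hx =>
    abs_le.2 ⟨by linarith [le_max_left (-a) b, hx.1], hx.2.trans (le_max_right _ _)⟩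
  obtain ⟨K, hK⟩ := exists_holder_div_rpow ordConnected_Icc h0 hR hβ0.le (by linarith) hβ₀
    hβ₁.le hβ₁' hderiv hf'0 hCH.le hH hA0 hA
  -- `f 0 / |0| ^ β₁ = f 0 / 0 = 0`, so the case split in `h` is only notational.
  have hjunk : ∀ z : ℝ, (if z = 0 then 0 else f z / |z| ^ β₁) = f z / |z| ^ β₁ := by
    intro z
    split_ifs with hz <;> simp [hz, zero_rpow (by linarith : β₁ ≠ 0)]
  refine ⟨max K 1, by positivity, fun x hx y hy => ?_⟩
  rw [hjunk, hjunk]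
  exact (hK x hx y hy).trans (by gcongr; exact le_max_left _ _)

/-- Hölder continuity of `h(x) = f(x)/|x|^{β₁}` for `f ∈ C^{1,β}(I)`
with `f(x) = O(|x|^{β₀})` at `0`, where `β̄ = (β₀-β₁)/(β₀-β)`. -/
theorem holder_quotient_C1 (a b : ℝ) (ha : a ≤ 0) (hb : 0 ≤ b)
    (β β₀ β₁ : ℝ) (hβ : β ∈ Set.Ioc (0 : ℝ) 1) (hβ₀ : 1 + β ≤ β₀)
    (hβ₁ : 1 < β₁) (hβ₁' : β₁ < β₀)
    (f f' : ℝ → ℝ)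
    (hderiv : ∀ x ∈ Set.Icc a b, HasDerivWithinAt f (f' x) (Set.Icc a b) x)
    (hcont : ContinuousOn f' (Set.Icc a b))
    (hholder : ∃ C > 0, ∀ x ∈ Set.Icc a b, ∀ y ∈ Set.Icc a b,
      |f' x - f' y| ≤ C * |x - y| ^ β)
    (hO : f =O[nhdsWithin 0 (Set.Icc a b)] fun x : ℝ => |x| ^ β₀) :
    ∃ C > 0, ∀ x ∈ Set.Icc a b, ∀ y ∈ Set.Icc a b,
      |(if x = 0 then 0 else f x / |x| ^ β₁) - (if y = 0 then 0 else f y / |y| ^ β₁)|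
        ≤ C * |x - y| ^ ((β₀ - β₁) / (β₀ - β)) :=
  holder_quotient_C1_general a b ha hb β β₀ β₁ hβ hβ₀ hβ₁ hβ₁' f f' hderiv hholder hO
end

section
/- Let I be a closed interval containing 0, let β ∈ (0,1), and let f : I → ℝ be Hölder continuous of exponent β on I with f(x) = O(|x|) as |x| → 0. Let 1/2 ≤ β_1 < 1 and define h(x) := f(x)/|x|^{β_1} for x ≠ 0 and h(0) := 0. Then h is Hölder continuous on I of exponent β̄ := β(1 − β_1); i.e., there is C > 0 with |h(x) − h(y)| ≤ C|x − y|^{β̄} for all x, y ∈ I. -/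
open Asymptotics Filter Topology

/-!
On the whole interval `|f x| ≤ K |x|`: near `0` by the `O(|x|)` hypothesis, away from `0` because
`f` is bounded. For `|y| ≤ |x|` split
`f x / |x| ^ β₁ - f y / |y| ^ β₁ = (f x - f y) / |x| ^ β₁ + f y (|x| ^ (-β₁) - |y| ^ (-β₁))`.
Interpolating `|f x - f y| ≤ C |x - y| ^ β` with `|f x - f y| ≤ 2 K |x|` through
`min p q ≤ p ^ (1 - β₁) q ^ β₁` bounds the first term by a multiple of `|x - y| ^ (β (1 - β₁))`;
the second is at most `K |x - y| ^ (1 - β₁)`, dominated by the same power on a bounded interval.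
-/

namespace Real

lemma min_le_rpow_mul_rpow {p q θ : ℝ} (hp : 0 ≤ p) (hq : 0 ≤ q) (hθ : 0 ≤ θ) (hθ1 : θ ≤ 1) :
    min p q ≤ p ^ θ * q ^ (1 - θ) := by
  have hm : 0 ≤ min p q := le_min hp hq
  calc min p q = min p q ^ θ * min p q ^ (1 - θ) := by
        rw [← rpow_add' hm (by norm_num), add_sub_cancel, rpow_one]
    _ ≤ p ^ θ * q ^ (1 - θ) :=
        mul_le_mul (rpow_le_rpow hm (min_le_left _ _) hθ)
          (rpow_le_rpow hm (min_le_right _ _) (by linarith)) (rpow_nonneg hm _) (rpow_nonneg hp _)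

lemma rpow_le_rpow_mul_rpow_of_le {t M p q : ℝ} (ht : 0 ≤ t) (htM : t ≤ M) (hq : 0 ≤ q)
    (hqp : q ≤ p) : t ^ p ≤ M ^ (p - q) * t ^ q := by
  rcases hq.eq_or_lt with rfl | hq
  · obtain rfl | hp := hqp.eq_or_lt
    · simp
    · rw [sub_zero, rpow_zero, mul_one]
      exact rpow_le_rpow ht htM hp.le
  calc t ^ p = t ^ (p - q) * t ^ q := by rw [← rpow_add' ht (by linarith), sub_add_cancel]
    _ ≤ M ^ (p - q) * t ^ q := by gcongr

lemma mul_inv_rpow_sub_inv_rpow_le {u v p : ℝ} (hv : 0 < v) (hvu : v ≤ u) (hp : 0 ≤ p)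
    (hp1 : p ≤ 1) : v * ((v ^ p)⁻¹ - (u ^ p)⁻¹) ≤ (u - v) ^ (1 - p) := by
  have hu : 0 < u := hv.trans_le hvu
  have hv' : v * (v ^ p)⁻¹ = v ^ (1 - p) := by rw [rpow_sub hv, rpow_one, div_eq_mul_inv]
  have hu' : u * (u ^ p)⁻¹ = u ^ (1 - p) := by rw [rpow_sub hu, rpow_one, div_eq_mul_inv]
  calc v * ((v ^ p)⁻¹ - (u ^ p)⁻¹) = v ^ (1 - p) - v * (u ^ p)⁻¹ := by rw [mul_sub, hv']
    _ ≤ u ^ (1 - p) - v * (u ^ p)⁻¹ := by gcongr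
    _ = (u - v) * (u ^ p)⁻¹ := by rw [← hu']; ring
    _ ≤ (u - v) ^ (1 - p) := by
        rw [mul_inv_le_iff₀ (rpow_pos_of_pos hu p)]
        simpa [sub_sub_cancel, mul_comm] using
          rpow_le_rpow_mul_rpow_of_le (p := 1) (q := 1 - p) (sub_nonneg.2 hvu)
            (sub_le_self u hv.le) (by linarith) (by linarith)

end Real

lemma exists_abs_le_mul_abs_of_isBigO {s : Set ℝ} {f : ℝ → ℝ} {B : ℝ}
    (hB : ∀ x ∈ s, |f x| ≤ B) (hO : f =O[𝓝[s] 0] fun x ↦ |x|) :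
    ∃ K, 0 < K ∧ ∀ x ∈ s, |f x| ≤ K * |x| := by
  obtain ⟨c, hc⟩ := hO.bound
  rw [eventually_nhdsWithin_iff, Metric.eventually_nhds_iff] at hc
  obtain ⟨δ, hδ, hnear⟩ := hc
  refine ⟨max c 1 + max B 0 / δ, by positivity, fun x hx ↦ ?_⟩
  have hnear₀ : 0 ≤ max c 1 * |x| := by positivity
  have hfar₀ : 0 ≤ max B 0 / δ * |x| := by positivity
  rw [add_mul]
  rcases lt_or_ge |x| δ with hxδ | hxδ
  · calc |f x| ≤ c * |x| := by simpa using hnear (by simpa using hxδ) hx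
      _ ≤ max c 1 * |x| := by gcongr; exact le_max_left _ _
      _ ≤ _ := by linarith
  · calc |f x| ≤ max B 0 / δ * δ := by
          rw [div_mul_cancel₀ _ hδ.ne']; exact (hB x hx).trans (le_max_left _ _)
      _ ≤ max B 0 / δ * |x| := by gcongr
      _ ≤ _ := by linarith

lemma abs_le_of_holder {s : Set ℝ} {f : ℝ → ℝ} {C M β : ℝ} (h0 : 0 ∈ s)
    (hM : ∀ x ∈ s, |x| ≤ M) (hβ : 0 ≤ β) (hC : 0 ≤ C)
    (hf : ∀ x ∈ s, ∀ y ∈ s, |f x - f y| ≤ C * |x - y| ^ β) (x : ℝ) (hx : x ∈ s) :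
    |f x| ≤ |f 0| + C * M ^ β := by
  have h := hf x hx 0 h0
  rw [sub_zero] at h
  have hxM : C * |x| ^ β ≤ C * M ^ β := by gcongr; exact hM x hx
  linarith [abs_sub_abs_le_abs_sub (f x) (f 0)]

/-- At `0` the quotient is `f 0 / 0` (or `f 0 / 1` when `β₁ = 0`), so the `if` is redundant. -/
lemma ite_zero_div_rpow_eq {f : ℝ → ℝ} (hf : f 0 = 0) (β₁ x : ℝ) :
    (if x = 0 then 0 else f x / |x| ^ β₁) = f x / |x| ^ β₁ := by
  split_ifs with hx <;> simp [hx, hf]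

section Quotient

variable {f : ℝ → ℝ} {C K β β₁ x y : ℝ}

lemma abs_sub_div_rpow_le (hC : 0 ≤ C) (hK : 0 ≤ K) (hβ₁ : 0 ≤ β₁) (hβ₁' : β₁ ≤ 1)
    (hxy : |f x - f y| ≤ C * |x - y| ^ β) (hx : |f x| ≤ K * |x|) (hy : |f y| ≤ K * |y|)
    (hyx : |y| ≤ |x|) :
    |f x - f y| / |x| ^ β₁ ≤ C ^ (1 - β₁) * (2 * K) ^ β₁ * |x - y| ^ (β * (1 - β₁)) := by
  have hlin : |f x - f y| ≤ 2 * K * |x| := by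
    have : K * |y| ≤ K * |x| := by gcongr
    linarith [abs_sub (f x) (f y)]
  have hinterp := Real.min_le_rpow_mul_rpow (θ := 1 - β₁) (by positivity : 0 ≤ C * |x - y| ^ β)
    (by positivity : 0 ≤ 2 * K * |x|) (by linarith) (by linarith)
  rw [sub_sub_cancel, Real.mul_rpow hC (by positivity),
    Real.mul_rpow (by positivity) (by positivity), ← Real.rpow_mul (abs_nonneg _)] at hinterp
  refine div_le_of_le_mul₀ (by positivity) (by positivity) ?_
  calc |f x - f y| ≤ min (C * |x - y| ^ β) (2 * K * |x|) := le_min hxy hlin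
    _ ≤ _ := hinterp
    _ = _ := by ring

lemma abs_mul_abs_inv_rpow_sub_inv_rpow_le (hK : 0 ≤ K) (hβ₁ : 0 ≤ β₁) (hβ₁' : β₁ ≤ 1)
    (hy : |f y| ≤ K * |y|) (hyx : |y| ≤ |x|) :
    |f y| * |(|x| ^ β₁)⁻¹ - (|y| ^ β₁)⁻¹| ≤ K * |x - y| ^ (1 - β₁) := by
  rcases eq_or_ne y 0 with rfl | hy0
  · have : f 0 = 0 := by simpa using hy
    simp only [this, abs_zero, zero_mul]
    positivity
  have hypos : 0 < |y| := abs_pos.2 hy0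
  have hinv : (|x| ^ β₁)⁻¹ ≤ (|y| ^ β₁)⁻¹ := by gcongr
  calc |f y| * |(|x| ^ β₁)⁻¹ - (|y| ^ β₁)⁻¹| = |f y| * ((|y| ^ β₁)⁻¹ - (|x| ^ β₁)⁻¹) := by
        rw [abs_sub_comm, abs_of_nonneg (sub_nonneg.2 hinv)]
    _ ≤ K * (|y| * ((|y| ^ β₁)⁻¹ - (|x| ^ β₁)⁻¹)) := by
        rw [← mul_assoc]; gcongr
    _ ≤ K * (|x| - |y|) ^ (1 - β₁) := by
        gcongr; exact Real.mul_inv_rpow_sub_inv_rpow_le hypos hyx hβ₁ hβ₁'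
    _ ≤ K * |x - y| ^ (1 - β₁) := by
        gcongr
        exact abs_sub_abs_le_abs_sub x y

lemma abs_div_rpow_sub_div_rpow_le_of_abs_le (hC : 0 ≤ C) (hK : 0 ≤ K) (hβ₁ : 0 ≤ β₁)
    (hβ₁' : β₁ ≤ 1) (hxy : |f x - f y| ≤ C * |x - y| ^ β) (hx : |f x| ≤ K * |x|)
    (hy : |f y| ≤ K * |y|) (hyx : |y| ≤ |x|) :
    |f x / |x| ^ β₁ - f y / |y| ^ β₁| ≤
      C ^ (1 - β₁) * (2 * K) ^ β₁ * |x - y| ^ (β * (1 - β₁)) + K * |x - y| ^ (1 - β₁) := by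
  have hsplit : f x / |x| ^ β₁ - f y / |y| ^ β₁ =
      (f x - f y) / |x| ^ β₁ + f y * ((|x| ^ β₁)⁻¹ - (|y| ^ β₁)⁻¹) := by ring
  rw [hsplit]
  refine (abs_add_le _ _).trans (add_le_add ?_ ?_)
  · rw [abs_div, abs_of_nonneg (by positivity : 0 ≤ |x| ^ β₁)]
    exact abs_sub_div_rpow_le hC hK hβ₁ hβ₁' hxy hx hy hyx
  · rw [abs_mul]
    exact abs_mul_abs_inv_rpow_sub_inv_rpow_le hK hβ₁ hβ₁' hy hyx

lemma abs_div_rpow_sub_div_rpow_le_s18 {s : Set ℝ} {M : ℝ} (hM : ∀ x ∈ s, |x| ≤ M) (hC : 0 ≤ C)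
    (hK : 0 ≤ K) (hβ : 0 ≤ β) (hβ' : β ≤ 1) (hβ₁ : 0 ≤ β₁) (hβ₁' : β₁ ≤ 1)
    (hf : ∀ x ∈ s, ∀ y ∈ s, |f x - f y| ≤ C * |x - y| ^ β) (hlin : ∀ x ∈ s, |f x| ≤ K * |x|)
    (hx : x ∈ s) (hy : y ∈ s) :
    |f x / |x| ^ β₁ - f y / |y| ^ β₁| ≤
      (C ^ (1 - β₁) * (2 * K) ^ β₁ + K * (2 * M) ^ (1 - β₁ - β * (1 - β₁))) *
        |x - y| ^ (β * (1 - β₁)) := by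
  have hbound : |f x / |x| ^ β₁ - f y / |y| ^ β₁| ≤
      C ^ (1 - β₁) * (2 * K) ^ β₁ * |x - y| ^ (β * (1 - β₁)) + K * |x - y| ^ (1 - β₁) := by
    rcases le_total |y| |x| with hyx | hxy
    · exact abs_div_rpow_sub_div_rpow_le_of_abs_le hC hK hβ₁ hβ₁' (hf x hx y hy) (hlin x hx)
        (hlin y hy) hyx
    · rw [abs_sub_comm, abs_sub_comm x y]
      exact abs_div_rpow_sub_div_rpow_le_of_abs_le hC hK hβ₁ hβ₁' (hf y hy x hx) (hlin y hy)
        (hlin x hx) hxy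
  have hdiam : |x - y| ≤ 2 * M := by
    linarith [abs_sub x y, hM x hx, hM y hy]
  have hexp := Real.rpow_le_rpow_mul_rpow_of_le (abs_nonneg (x - y)) hdiam
    (by positivity : 0 ≤ β * (1 - β₁)) (by nlinarith : β * (1 - β₁) ≤ 1 - β₁)
  calc _ ≤ _ := hbound
    _ ≤ C ^ (1 - β₁) * (2 * K) ^ β₁ * |x - y| ^ (β * (1 - β₁)) +
        K * ((2 * M) ^ (1 - β₁ - β * (1 - β₁)) * |x - y| ^ (β * (1 - β₁))) := by gcongr
    _ = _ := by ring

end Quotient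

/-- Hölder continuity of `h(x) = f(x)/|x|^{β₁}` for `f ∈ C^{0,β}(I)`
with `f(x) = O(|x|)` at `0` and `1/2 ≤ β₁ < 1`, where `β̄ = β(1-β₁)`. -/
theorem holder_quotient_C0 (a b : ℝ) (ha : a ≤ 0) (hb : 0 ≤ b)
    (β β₁ : ℝ) (hβ : β ∈ Set.Ioo (0 : ℝ) 1) (hβ₁ : 1 / 2 ≤ β₁) (hβ₁' : β₁ < 1)
    (f : ℝ → ℝ)
    (hholder : ∃ C > 0, ∀ x ∈ Set.Icc a b, ∀ y ∈ Set.Icc a b,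
      |f x - f y| ≤ C * |x - y| ^ β)
    (hO : f =O[nhdsWithin 0 (Set.Icc a b)] fun x : ℝ => |x|) :
    ∃ C > 0, ∀ x ∈ Set.Icc a b, ∀ y ∈ Set.Icc a b,
      |(if x = 0 then 0 else f x / |x| ^ β₁) - (if y = 0 then 0 else f y / |y| ^ β₁)|
        ≤ C * |x - y| ^ (β * (1 - β₁)) := by
  obtain ⟨C, hC, hf⟩ := hholder
  have h0 : (0 : ℝ) ∈ Set.Icc a b := ⟨ha, hb⟩
  have hM : ∀ x ∈ Set.Icc a b, |x| ≤ max |a| |b| := fun x hx ↦ abs_le_max_abs_abs hx.1 hx.2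
  obtain ⟨K, hK, hlin⟩ :=
    exists_abs_le_mul_abs_of_isBigO (abs_le_of_holder h0 hM hβ.1.le hC.le hf) hO
  have hf0 : f 0 = 0 := by simpa using hlin 0 h0
  refine ⟨C ^ (1 - β₁) * (2 * K) ^ β₁ + K * (2 * max |a| |b|) ^ (1 - β₁ - β * (1 - β₁)),
    by positivity, fun x hx y hy ↦ ?_⟩
  rw [ite_zero_div_rpow_eq hf0, ite_zero_div_rpow_eq hf0]
  exact abs_div_rpow_sub_div_rpow_le_s18 hM hC.le hK.le hβ.1.le hβ.2.le (by linarith) hβ₁'.le hf hlin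
    hx hy
end

section
/- Let p : ℤ → ℝ be an admissible probability mass function of index α and let φ(θ) = Σ_{x∈ℤ} p(x)e^{iθx} be its (2π-periodic, real-valued) characteristic function. If α ∈ (1,2), then for every sufficiently small ε > 0, φ is continuously differentiable on ℝ and φ′ is Hölder continuous of exponent α − 1 − ε. If α = 1, then for every sufficiently small ε > 0, φ is Hölder continuous of exponent 1 − ε on ℝ. -/
open MeasureTheory Filter Asymptotics Topology

noncomputable def charFn (p : ℤ → ℝ) (θ : ℝ) : ℝ := ∑' x : ℤ, p x * Real.cos (θ * (x : ℝ))

structure IsAdmissible (p : ℤ → ℝ) (α : ℝ) (R : Finset ℝ) (κα : ℝ) (κ : ℝ → ℝ) : Prop where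
  nonneg : ∀ x, 0 ≤ p x
  hasSum_one : HasSum p 1
  symm : ∀ x, p (-x) = p x
  alpha_mem : α ∈ Set.Ioo (0 : ℝ) 2
  R_subset : ∀ β ∈ R, β ∈ Set.Ioo α (2 + α)
  kappa_pos : 0 < κα
  kappaR_ne : ∀ β ∈ R, κ β ≠ 0
  expansion : (fun θ : ℝ => charFn p θ - (1 - κα * |θ| ^ α + ∑ β ∈ R, κ β * |θ| ^ β))
      =O[nhds 0] fun θ : ℝ => |θ| ^ (2 + α)

/-!
Near `0` the expansion gives `1 - φ θ = O(|θ| ^ α)`. On the dyadic shell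
`2 ^ j ≤ |n| < 2 ^ (j + 1)` one has `1 - cos (n / 2 ^ j) ≥ 1 / 3`, so the shell has `p`-mass
`O(1 - φ (2 ^ (-j))) = O(2 ^ (-j α))`; summing over shells gives `∑ p n |n| ^ γ < ∞` for `γ < α`.
Since `|cos a - cos b|` and `|sin a - sin b|` are at most `min 2 |a - b| ≤ 2 ^ (1 - t) |a - b| ^ t`,
estimating the series of `φ` (and of `φ'`, obtained by termwise differentiation) term by term shows
that `φ` is `t`-Hölder when `∑ p n |n| ^ t < ∞` and `φ'` is `t`-Hölder when
`∑ p n |n| ^ (1 + t) < ∞`.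
-/

open Real

lemma Summable.mul_of_abs_le_one {ι : Type*} {f g : ι → ℝ} (hf : Summable f)
    (hg : ∀ i, |g i| ≤ 1) : Summable fun i => f i * g i :=
  hf.abs.of_norm_bounded fun i => by
    rw [norm_mul, Real.norm_eq_abs, Real.norm_eq_abs]
    exact mul_le_of_le_one_right (abs_nonneg _) (hg i)

lemma abs_tsum_sub_tsum_le {ι : Type*} {f g a : ι → ℝ} (hf : Summable f) (hg : Summable g)
    (ha : Summable a) (h : ∀ i, |f i - g i| ≤ a i) : |∑' i, f i - ∑' i, g i| ≤ ∑' i, a i := by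
  rw [← hf.tsum_sub hg, abs_le, ← tsum_neg]
  exact ⟨ha.neg.tsum_le_tsum (fun i => neg_le_of_abs_le (h i)) (hf.sub hg),
    (hf.sub hg).tsum_le_tsum (fun i => (le_abs_self _).trans (h i)) ha⟩

lemma summable_mul_abs_rpow_of_le {w : ℤ → ℝ} {s s' : ℝ} (hw : ∀ n, 0 ≤ w n) (hss' : s ≤ s')
    (h : Summable fun n : ℤ => w n * |(n : ℝ)| ^ s') :
    Summable fun n : ℤ => w n * |(n : ℝ)| ^ s := by
  refine h.of_norm_bounded_eventually ?_
  filter_upwards [eventually_cofinite_ne 0] with n hn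
  have hn1 : (1 : ℝ) ≤ |(n : ℝ)| := by
    rw [← Int.cast_abs]; exact_mod_cast Int.one_le_abs hn
  rw [Real.norm_of_nonneg (mul_nonneg (hw n) (rpow_nonneg (abs_nonneg _) _))]
  exact mul_le_mul_of_nonneg_left (rpow_le_rpow_of_exponent_le hn1 hss') (hw n)

lemma LipschitzWith.abs_sub_le_two_rpow_mul {f : ℝ → ℝ} (hf : LipschitzWith 1 f)
    (hbdd : ∀ a, |f a| ≤ 1) {t : ℝ} (ht0 : 0 ≤ t) (ht1 : t ≤ 1) (a b : ℝ) :
    |f a - f b| ≤ 2 ^ (1 - t) * |a - b| ^ t := by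
  have hlip : |f a - f b| ≤ |a - b| := by
    simpa [Real.dist_eq] using hf.dist_le_mul a b
  have hbd : |f a - f b| ≤ 2 :=
    (abs_sub _ _).trans (by linarith [hbdd a, hbdd b])
  rcases le_total |a - b| 2 with hab | hab
  · calc |f a - f b| ≤ |a - b| ^ (1 - t) * |a - b| ^ t := by
          rwa [← rpow_add' (abs_nonneg _) (by norm_num), sub_add_cancel, rpow_one]
      _ ≤ 2 ^ (1 - t) * |a - b| ^ t := by gcongr
  · calc |f a - f b| ≤ 2 ^ (1 - t) * 2 ^ t := by
          rwa [← rpow_add two_pos, sub_add_cancel, rpow_one]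
      _ ≤ 2 ^ (1 - t) * |a - b| ^ t := by gcongr

lemma abs_tsum_mul_comp_sub_le {f : ℝ → ℝ} (hf : LipschitzWith 1 f) (hbdd : ∀ a, |f a| ≤ 1)
    {w : ℤ → ℝ} {t : ℝ} (ht0 : 0 ≤ t) (ht1 : t ≤ 1)
    (hw : Summable fun n : ℤ => |w n| * |(n : ℝ)| ^ t) (x y : ℝ) :
    |∑' n : ℤ, w n * f (x * n) - ∑' n : ℤ, w n * f (y * n)|
      ≤ 2 ^ (1 - t) * (∑' n : ℤ, |w n| * |(n : ℝ)| ^ t) * |x - y| ^ t := by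
  have hw₀ : Summable fun n : ℤ => w n :=
    .of_abs <| by simpa using summable_mul_abs_rpow_of_le (fun n => abs_nonneg (w n)) ht0 hw
  have hterm : ∀ n : ℤ, |w n * f (x * n) - w n * f (y * n)|
      ≤ 2 ^ (1 - t) * |x - y| ^ t * (|w n| * |(n : ℝ)| ^ t) := by
    intro n
    rw [← mul_sub, abs_mul]
    calc |w n| * |f (x * n) - f (y * n)| ≤ |w n| * (2 ^ (1 - t) * |x * n - y * n| ^ t) :=
          mul_le_mul_of_nonneg_left (hf.abs_sub_le_two_rpow_mul hbdd ht0 ht1 _ _) (abs_nonneg _)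
      _ = 2 ^ (1 - t) * |x - y| ^ t * (|w n| * |(n : ℝ)| ^ t) := by
          rw [← sub_mul, abs_mul, mul_rpow (abs_nonneg _) (abs_nonneg _)]
          ring
  refine (abs_tsum_sub_tsum_le (hw₀.mul_of_abs_le_one fun n => hbdd _)
    (hw₀.mul_of_abs_le_one fun n => hbdd _) (hw.mul_left _) hterm).trans_eq ?_
  rw [tsum_mul_left]
  ring

lemma continuous_of_abs_sub_le_mul_rpow {f : ℝ → ℝ} {C t : ℝ} (ht : 0 < t)
    (h : ∀ x y, |f x - f y| ≤ C * |x - y| ^ t) : Continuous f := by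
  refine continuous_iff_continuousAt.2 fun x => tendsto_iff_dist_tendsto_zero.2 <|
    squeeze_zero (fun _ => dist_nonneg) (fun y => (Real.dist_eq _ _).trans_le (h y x)) ?_
  have hcont : Continuous fun y : ℝ => C * |y - x| ^ t :=
    continuous_const.mul (((continuous_id.sub continuous_const).abs).rpow_const
      fun _ => Or.inr ht.le)
  simpa [zero_rpow ht.ne'] using hcont.tendsto x

lemma exists_pos_abs_sub_le_mul_rpow {f : ℝ → ℝ} {C t : ℝ}
    (h : ∀ x y, |f x - f y| ≤ C * |x - y| ^ t) :
    ∃ C' > 0, ∀ x y, |f x - f y| ≤ C' * |x - y| ^ t :=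
  ⟨max C 1, by positivity, fun x y =>
    (h x y).trans (mul_le_mul_of_nonneg_right (le_max_left _ _) (rpow_nonneg (abs_nonneg _) _))⟩

lemma isBigO_abs_rpow_of_le {α β : ℝ} (hα : 0 ≤ α) (hαβ : α ≤ β) :
    (fun θ : ℝ => |θ| ^ β) =O[𝓝 0] fun θ => |θ| ^ α := by
  refine IsBigO.of_bound 1 ?_
  filter_upwards [Metric.closedBall_mem_nhds (0 : ℝ) one_pos] with θ hθ
  rw [Metric.mem_closedBall, Real.dist_eq, sub_zero] at hθ
  rw [one_mul, norm_of_nonneg (rpow_nonneg (abs_nonneg _) _),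
    norm_of_nonneg (rpow_nonneg (abs_nonneg _) _)]
  exact rpow_le_rpow_of_exponent_ge' (abs_nonneg _) hθ hα hαβ

lemma hasSum_one_sub_charFn {p : ℤ → ℝ} (hp : HasSum p 1) (θ : ℝ) :
    HasSum (fun n : ℤ => p n * (1 - cos (θ * n))) (1 - charFn p θ) := by
  simpa only [charFn, mul_sub, mul_one] using
    hp.sub (hp.summable.mul_of_abs_le_one fun n => abs_cos_le_one (θ * n)).hasSum

/-- `Nat.log 2 0 = 0`, so the shell `0` contains `0` besides `±1`. -/
def dyadicShell (j : ℕ) : Set ℤ := {n | Nat.log 2 n.natAbs = j}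

lemma abs_lt_of_mem_dyadicShell {j : ℕ} {n : ℤ} (hn : n ∈ dyadicShell j) :
    |(n : ℝ)| < 2 ^ (j + 1) := by
  rw [← Int.cast_abs, ← Nat.cast_natAbs]
  exact mod_cast hn ▸ Nat.lt_pow_succ_log_self one_lt_two _

lemma le_abs_of_mem_dyadicShell {j : ℕ} (hj : j ≠ 0) {n : ℤ} (hn : n ∈ dyadicShell j) :
    (2 : ℝ) ^ j ≤ |(n : ℝ)| := by
  have hn0 : n.natAbs ≠ 0 := fun h => hj (by rw [← hn, h, Nat.log_zero_right])
  rw [← Int.cast_abs, ← Nat.cast_natAbs]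
  exact mod_cast hn ▸ Nat.pow_log_le_self 2 hn0

lemma one_le_three_mul_one_sub_cos {x : ℝ} (h1 : 1 ≤ |x|) (hπ : |x| ≤ π) :
    1 ≤ 3 * (1 - cos x) := by
  have : cos |x| ≤ cos 1 := cos_le_cos_of_nonneg_of_le_pi zero_le_one hπ h1
  linarith [cos_abs x, cos_one_le]

lemma tsum_dyadicShell_le {p : ℤ → ℝ} (hnn : ∀ n, 0 ≤ p n) (hp : HasSum p 1) {γ : ℝ}
    (hγ : 0 ≤ γ) {j : ℕ} (hj : j ≠ 0) :
    ∑' n : dyadicShell j, p n * |(n : ℝ)| ^ γ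
      ≤ 3 * ((2 : ℝ) ^ (j + 1)) ^ γ * (1 - charFn p (2 ^ j)⁻¹) := by
  set θ : ℝ := (2 ^ j)⁻¹
  have hcos_nn : ∀ n : ℤ, 0 ≤ p n * (1 - cos (θ * n)) :=
    fun n => mul_nonneg (hnn n) (by linarith [cos_le_one (θ * n)])
  have hbound : ∀ n : dyadicShell j,
      p n * |(n : ℝ)| ^ γ ≤ 3 * ((2 : ℝ) ^ (j + 1)) ^ γ * (p n * (1 - cos (θ * n))) := by
    rintro ⟨n, hn⟩
    have hlow := le_abs_of_mem_dyadicShell hj hn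
    have hhigh := abs_lt_of_mem_dyadicShell hn
    have hphase : |θ * n| = |(n : ℝ)| / 2 ^ j := by
      rw [abs_mul, abs_of_pos (by positivity), inv_mul_eq_div]
    have hcos : 1 ≤ 3 * (1 - cos (θ * n)) := by
      refine one_le_three_mul_one_sub_cos ?_ ?_ <;> rw [hphase]
      · exact (one_le_div (by positivity)).2 hlow
      · rw [div_le_iff₀ (by positivity)]
        nlinarith [pi_gt_three, pow_succ (2 : ℝ) j]
    have hpow : |(n : ℝ)| ^ γ ≤ ((2 : ℝ) ^ (j + 1)) ^ γ :=
      rpow_le_rpow (abs_nonneg _) hhigh.le hγ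
    calc p n * |(n : ℝ)| ^ γ ≤ p n * ((2 : ℝ) ^ (j + 1)) ^ γ * 1 := by
          rw [mul_one]; exact mul_le_mul_of_nonneg_left hpow (hnn n)
      _ ≤ p n * ((2 : ℝ) ^ (j + 1)) ^ γ * (3 * (1 - cos (θ * n))) := by
          gcongr; exact mul_nonneg (hnn n) (by positivity)
      _ = _ := by ring
  have hsum : Summable fun n : ℤ => p n * (1 - cos (θ * n)) := (hasSum_one_sub_charFn hp θ).summable
  have hsum' := (hsum.subtype (dyadicShell j)).mul_left (3 * ((2 : ℝ) ^ (j + 1)) ^ γ)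
  have hmoment_nn : ∀ n : dyadicShell j, 0 ≤ p n * |(n : ℝ)| ^ γ :=
    fun n => mul_nonneg (hnn n) (rpow_nonneg (abs_nonneg _) _)
  calc ∑' n : dyadicShell j, p n * |(n : ℝ)| ^ γ
      ≤ ∑' n : dyadicShell j, 3 * ((2 : ℝ) ^ (j + 1)) ^ γ * (p n * (1 - cos (θ * n))) :=
        (Summable.of_nonneg_of_le hmoment_nn hbound hsum').tsum_le_tsum hbound hsum'
    _ ≤ 3 * ((2 : ℝ) ^ (j + 1)) ^ γ * ∑' n : ℤ, p n * (1 - cos (θ * n)) := by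
        rw [tsum_mul_left]
        gcongr
        exact hsum.tsum_subtype_le _ _ hcos_nn
    _ = 3 * ((2 : ℝ) ^ (j + 1)) ^ γ * (1 - charFn p θ) := by
        rw [(hasSum_one_sub_charFn hp θ).tsum_eq]

lemma two_pow_succ_rpow_mul_inv_rpow (j : ℕ) (γ α : ℝ) :
    ((2 : ℝ) ^ (j + 1)) ^ γ * |((2 : ℝ) ^ j)⁻¹| ^ α = 2 ^ γ * (2 ^ (γ - α)) ^ j := by
  rw [abs_of_pos (by positivity), inv_rpow (by positivity), ← rpow_pow_comm two_pos.le,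
    ← rpow_pow_comm two_pos.le, rpow_sub two_pos, div_pow, pow_succ]
  field_simp

theorem summable_mul_abs_rpow_of_isBigO {p : ℤ → ℝ} {α γ : ℝ} (hnn : ∀ n, 0 ≤ p n)
    (hp : HasSum p 1) (hφ : (fun θ => 1 - charFn p θ) =O[𝓝 0] fun θ => |θ| ^ α)
    (hγ0 : 0 ≤ γ) (hγα : γ < α) : Summable fun n : ℤ => p n * |(n : ℝ)| ^ γ := by
  have hf : 0 ≤ fun n : ℤ => p n * |(n : ℝ)| ^ γ :=
    fun n => mul_nonneg (hnn n) (rpow_nonneg (abs_nonneg _) _)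
  refine (summable_partition hf (s := dyadicShell) fun n => ⟨_, rfl, fun j hj => hj.symm⟩).2
    ⟨fun j => ?_, ?_⟩
  · refine Summable.of_nonneg_of_le (fun n => hf n) (fun n => ?_)
      ((hp.summable.subtype (dyadicShell j)).mul_left (((2 : ℝ) ^ (j + 1)) ^ γ))
    rw [mul_comm]
    exact mul_le_mul_of_nonneg_right
      (rpow_le_rpow (abs_nonneg _) (abs_lt_of_mem_dyadicShell n.2).le hγ0) (hnn n)
  · have hθ : Tendsto (fun j : ℕ => ((2 : ℝ) ^ j)⁻¹) atTop (𝓝 0) :=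
      tendsto_inv_atTop_zero.comp (tendsto_pow_atTop_atTop_of_one_lt one_lt_two)
    have hshell : (fun j : ℕ => ∑' n : dyadicShell j, p n * |(n : ℝ)| ^ γ)
        =O[atTop] fun j => 3 * ((2 : ℝ) ^ (j + 1)) ^ γ * (1 - charFn p (2 ^ j)⁻¹) := by
      refine IsBigO.of_bound 1 ?_
      filter_upwards [eventually_ne_atTop 0] with j hj
      rw [norm_of_nonneg (tsum_nonneg fun n : dyadicShell j => hf n), one_mul]
      exact (tsum_dyadicShell_le hnn hp hγ0 hj).trans (le_abs_self _)
    have hφj : (fun j : ℕ => 3 * ((2 : ℝ) ^ (j + 1)) ^ γ * (1 - charFn p (2 ^ j)⁻¹))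
        =O[atTop] fun j : ℕ => 3 * ((2 : ℝ) ^ γ * (2 ^ (γ - α)) ^ j) := by
      simp_rw [← two_pow_succ_rpow_mul_inv_rpow, ← mul_assoc]
      exact (isBigO_refl _ _).mul (hφ.comp_tendsto hθ)
    refine summable_of_isBigO_nat ?_ (hshell.trans hφj)
    exact ((summable_geometric_of_lt_one (by positivity)
      (rpow_lt_one_of_one_lt_of_neg one_lt_two (by linarith))).mul_left _).mul_left _

lemma IsAdmissible.one_sub_charFn_isBigO {p : ℤ → ℝ} {α : ℝ} {R : Finset ℝ} {κα : ℝ}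
    {κ : ℝ → ℝ} (hp : IsAdmissible p α R κα κ) :
    (fun θ => 1 - charFn p θ) =O[𝓝 0] fun θ => |θ| ^ α := by
  have hα : 0 ≤ α := hp.alpha_mem.1.le
  have hmain : (fun θ : ℝ => κα * |θ| ^ α - ∑ β ∈ R, κ β * |θ| ^ β) =O[𝓝 0] fun θ => |θ| ^ α :=
    ((isBigO_refl _ _).const_mul_left κα).sub <| by
      simpa only [Finset.sum_fn] using IsBigO.sum fun β hβ =>
        (isBigO_abs_rpow_of_le hα (hp.R_subset β hβ).1.le).const_mul_left (κ β)
  have hrem := hp.expansion.trans (isBigO_abs_rpow_of_le hα (by linarith))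
  exact (hmain.sub hrem).congr_left fun θ => by ring

noncomputable def charFnDeriv (p : ℤ → ℝ) (θ : ℝ) : ℝ :=
  ∑' n : ℤ, -(p n * n) * sin (θ * n)

theorem hasDerivAt_charFn {p : ℤ → ℝ} (hnn : ∀ n, 0 ≤ p n) (hp : Summable p)
    (hp₁ : Summable fun n : ℤ => p n * |(n : ℝ)|) (θ : ℝ) :
    HasDerivAt (charFn p) (charFnDeriv p θ) θ := by
  refine hasDerivAt_tsum (g := fun n θ => p n * cos (θ * n))
    (g' := fun n θ => -(p n * n) * sin (θ * n)) (y₀ := 0) hp₁ (fun n y => ?_) (fun n y => ?_)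
    (hp.mul_of_abs_le_one fun n => abs_cos_le_one _) θ
  · exact (((hasDerivAt_mul_const (n : ℝ)).cos).const_mul (p n)).congr_deriv (by ring)
  · show ‖-(p n * n) * sin (y * n)‖ ≤ p n * |(n : ℝ)|
    rw [norm_mul, norm_neg, norm_mul, Real.norm_eq_abs, Real.norm_eq_abs, abs_of_nonneg (hnn n)]
    exact mul_le_of_le_one_right (mul_nonneg (hnn n) (abs_nonneg _)) (abs_sin_le_one _)

theorem abs_charFn_sub_le {p : ℤ → ℝ} (hnn : ∀ n, 0 ≤ p n) {t : ℝ} (ht0 : 0 ≤ t) (ht1 : t ≤ 1)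
    (hp : Summable fun n : ℤ => p n * |(n : ℝ)| ^ t) (x y : ℝ) :
    |charFn p x - charFn p y| ≤ 2 ^ (1 - t) * (∑' n : ℤ, p n * |(n : ℝ)| ^ t) * |x - y| ^ t := by
  have hw : ∀ n : ℤ, |p n| * |(n : ℝ)| ^ t = p n * |(n : ℝ)| ^ t := fun n => by
    rw [abs_of_nonneg (hnn n)]
  simp_rw [← hw] at hp ⊢
  exact abs_tsum_mul_comp_sub_le lipschitzWith_cos abs_cos_le_one ht0 ht1 hp x y

theorem abs_charFnDeriv_sub_le {p : ℤ → ℝ} (hnn : ∀ n, 0 ≤ p n) {t : ℝ} (ht0 : 0 ≤ t)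
    (ht1 : t ≤ 1) (hp : Summable fun n : ℤ => p n * |(n : ℝ)| ^ (1 + t)) (x y : ℝ) :
    |charFnDeriv p x - charFnDeriv p y|
      ≤ 2 ^ (1 - t) * (∑' n : ℤ, p n * |(n : ℝ)| ^ (1 + t)) * |x - y| ^ t := by
  have hw : ∀ n : ℤ, |-(p n * n)| * |(n : ℝ)| ^ t = p n * |(n : ℝ)| ^ (1 + t) := fun n => by
    rw [abs_neg, abs_mul, abs_of_nonneg (hnn n), rpow_one_add' (abs_nonneg _) (by linarith)]
    ring
  simp_rw [← hw] at hp ⊢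
  exact abs_tsum_mul_comp_sub_le lipschitzWith_sin abs_sin_le_one ht0 ht1 hp x y

/-- smoothness of the characteristic function of an admissible law:
`φ ∈ C^{1,α-1-ε}` for `α ∈ (1,2)`, and `φ ∈ C^{0,1-ε}` for `α = 1`. -/
theorem charFn_smoothness (α : ℝ) (p : ℤ → ℝ) (R : Finset ℝ) (κα : ℝ) (κ : ℝ → ℝ)
    (hp : IsAdmissible p α R κα κ) :
    (α ∈ Set.Ioo (1 : ℝ) 2 →
      ∃ ε₀ > 0, ∀ ε ∈ Set.Ioo (0 : ℝ) ε₀,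
        ∃ φ' : ℝ → ℝ, (∀ θ : ℝ, HasDerivAt (charFn p) (φ' θ) θ) ∧ Continuous φ' ∧
          ∃ C > 0, ∀ x y : ℝ, |φ' x - φ' y| ≤ C * |x - y| ^ (α - 1 - ε)) ∧
    (α = 1 →
      ∃ ε₀ > 0, ∀ ε ∈ Set.Ioo (0 : ℝ) ε₀,
        ∃ C > 0, ∀ x y : ℝ, |charFn p x - charFn p y| ≤ C * |x - y| ^ (1 - ε)) := by
  have hmoment {γ : ℝ} (hγ0 : 0 ≤ γ) (hγα : γ < α) :=
    summable_mul_abs_rpow_of_isBigO hp.nonneg hp.hasSum_one hp.one_sub_charFn_isBigO hγ0 hγα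
  constructor
  · rintro ⟨hα1, hα2⟩
    refine ⟨α - 1, by linarith, fun ε ⟨hε0, hε⟩ => ?_⟩
    have hM : Summable fun n : ℤ => p n * |(n : ℝ)| ^ (1 + (α - 1 - ε)) :=
      hmoment (by linarith) (by linarith)
    have hM₁ : Summable fun n : ℤ => p n * |(n : ℝ)| := by
      simpa using summable_mul_abs_rpow_of_le hp.nonneg (s := 1) (by linarith) hM
    have hholder := abs_charFnDeriv_sub_le hp.nonneg (by linarith) (by linarith) hM
    exact ⟨charFnDeriv p, hasDerivAt_charFn hp.nonneg hp.hasSum_one.summable hM₁,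
      continuous_of_abs_sub_le_mul_rpow (by linarith) hholder,
      exists_pos_abs_sub_le_mul_rpow hholder⟩
  · rintro rfl
    refine ⟨1, one_pos, fun ε ⟨hε0, hε1⟩ => ?_⟩
    exact exists_pos_abs_sub_le_mul_rpow <| abs_charFn_sub_le hp.nonneg (by linarith) (by linarith)
      (hmoment (by linarith) (by linarith))
end
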